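/- arXiv:0803.1873 — 3 statements merged into one kernel-verified Lean document; each statement's English description precedes it below -/
import Mathlib

section
/- Real numbers L_1, L_2, L_3 are the expectation values tr(L_k^{(j)} ρ) of the spin-j operators for some density operator ρ on ℂ^{2j+1} if and only if L_1² + L_2² + L_3² ≤ j². -/
/-!
Write `L_n = ∑ n_k L_k` for a unit vector `n`. Completing `n` to a positively oriented orthonormal
frame `(a, b, n)` turns `(L_a, L_b, L_n)` into another spin-`j` triple, so everything reduces to
bounds on `L_n` alone. With the ladder operator `A = L_a + i L_b` one has
`A† A = j(j+1) - L_n² - L_n ≥ 0`; together with `⟨(L_n - e)²⟩ ≥ 0` for `e = ⟨L_n⟩` this gives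
`e² + e ≤ j(j+1)`, i.e. `e ≤ j`, and taking `n = v / |v|` gives `|v| ≤ j`. Conversely `A` raises
the eigenvalues of `L_n` by one, so it annihilates a top eigenvector `ψ`, whose eigenvalue is then
forced to be `j` and on which `⟨L_a⟩ = ⟨L_b⟩ = 0`: the pure state `ψ` has expectation vector `j n`.
The set of expectation vectors is convex, so it contains the whole ball of radius `j`.
-/

open Matrix
open scoped ComplexOrder

/-- The Levi-Civita symbol on three indices. -/
def leviCivita : Fin 3 → Fin 3 → Fin 3 → ℤ := fun k l m =>
  if (k, l, m) = (0, 1, 2) ∨ (k, l, m) = (1, 2, 0) ∨ (k, l, m) = (2, 0, 1) then 1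
  else if (k, l, m) = (0, 2, 1) ∨ (k, l, m) = (2, 1, 0) ∨ (k, l, m) = (1, 0, 2) then -1
  else 0

section Frames

lemma exists_unit_smul_eq {ι : Type*} [Fintype ι] [DecidableEq ι] [Nonempty ι] (v : ι → ℝ) :
    ∃ n : ι → ℝ, n ⬝ᵥ n = 1 ∧ v = √(v ⬝ᵥ v) • n := by
  by_cases hv : v = 0
  · exact ⟨Pi.single (Classical.arbitrary ι) 1, by simp, by simp [hv]⟩
  · have hpos : 0 < v ⬝ᵥ v :=
      (by simpa using dotProduct_self_star_nonneg v : 0 ≤ v ⬝ᵥ v).lt_of_ne' (by simpa using hv)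
    have hs : √(v ⬝ᵥ v) ≠ 0 := (Real.sqrt_pos.2 hpos).ne'
    refine ⟨(√(v ⬝ᵥ v))⁻¹ • v, ?_, by rw [smul_inv_smul₀ hs]⟩
    rw [dotProduct_smul, smul_dotProduct, smul_smul, smul_eq_mul, ← sq, inv_pow,
      Real.sq_sqrt hpos.le, inv_mul_cancel₀ hpos.ne']

lemma exists_unit_orthogonal (n : Fin 3 → ℝ) : ∃ a : Fin 3 → ℝ, a ⬝ᵥ a = 1 ∧ n ⬝ᵥ a = 0 := by
  set w : Fin 3 → ℝ := ![-n 1, n 0, 0]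
  have hnw : n ⬝ᵥ w = 0 := by simp [w, dotProduct, Fin.sum_univ_three]; ring
  obtain ⟨a, ha, hwa⟩ := exists_unit_smul_eq w
  by_cases hw : √(w ⬝ᵥ w) = 0
  · have h0 : n 0 = 0 := by
      rw [hw, zero_smul] at hwa
      simpa [w] using congrFun hwa 1
    exact ⟨Pi.single 0 1, by simp, by simp [h0]⟩
  · refine ⟨a, ha, ?_⟩
    rw [hwa, dotProduct_smul, smul_eq_mul] at hnw
    exact (mul_eq_zero.1 hnw).resolve_left hw

lemma exists_rotation_of_dotProduct_self_eq_one (n : Fin 3 → ℝ) (hn : n ⬝ᵥ n = 1) :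
    ∃ R : Matrix (Fin 3) (Fin 3) ℝ, R 2 = n ∧ Rᵀ * R = 1 ∧
      R 0 ⨯₃ R 1 = R 2 ∧ R 1 ⨯₃ R 2 = R 0 ∧ R 2 ⨯₃ R 0 = R 1 := by
  obtain ⟨a, ha, hna⟩ := exists_unit_orthogonal n
  have han : a ⬝ᵥ n = 0 := by rwa [dotProduct_comm]
  set b := n ⨯₃ a
  have hbb : b ⬝ᵥ b = 1 := by simp [b, cross_dot_cross, hn, ha, hna, han]
  have hab : a ⬝ᵥ b = 0 := dot_cross_self _ _
  have hnb : n ⬝ᵥ b = 0 := dot_self_cross _ _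
  refine ⟨of ![a, b, n], rfl, ?_, ?_, ?_, rfl⟩
  · rw [mul_eq_one_comm]
    ext i k
    fin_cases i <;> fin_cases k <;>
      simp [mul_apply, ← dotProduct.eq_def, ha, hab, hna, han, hbb, hnb, hn, dotProduct_comm b]
  · show a ⨯₃ (n ⨯₃ a) = n
    simp [cross_cross_eq_smul_sub_smul', ha, hna]
  · show n ⨯₃ a ⨯₃ n = a
    simp [cross_cross_eq_smul_sub_smul, hn, han]

end Frames

section MatrixFacts

variable {ι : Type*} [Fintype ι]

lemma sum_mul_eq_ite_of_transpose_mul_self_eq_one [DecidableEq ι] {R : Matrix ι ι ℝ}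
    (hR : Rᵀ * R = 1) (k l : ι) : ∑ i, R i k * R i l = if k = l then 1 else 0 := by
  simpa [mul_apply, one_apply] using congrFun (congrFun hR k) l

lemma trace_eq_zero_of_commutator_eq_I_smul {X Y Z : Matrix ι ι ℂ}
    (h : X * Y - Y * X = Complex.I • Z) : Z.trace = 0 := by
  have := congrArg trace h
  rw [trace_sub, trace_mul_comm, sub_self, trace_smul, smul_eq_mul] at this
  exact (mul_eq_zero.1 this.symm).resolve_left Complex.I_ne_zero

lemma trace_conjTranspose_mul_self_mul_nonneg {κ : Type*} [Fintype κ] (M : Matrix κ ι ℂ)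
    {ρ : Matrix ι ι ℂ} (hρ : ρ.PosSemidef) : 0 ≤ (Mᴴ * M * ρ).trace := by
  rw [Matrix.mul_assoc, trace_mul_comm]
  exact (hρ.mul_mul_conjTranspose_same M).trace_nonneg

lemma trace_mul_vecMulVec_star (M : Matrix ι ι ℂ) (ψ : ι → ℂ) :
    (M * vecMulVec ψ (star ψ)).trace = star ψ ⬝ᵥ M *ᵥ ψ := by
  rw [mul_vecMulVec, trace_vecMulVec, dotProduct_comm]

variable [DecidableEq ι] {A : Matrix ι ι ℂ}

lemma Matrix.IsHermitian.exists_eigenvalues_eq (hA : A.IsHermitian) {x : ι → ℂ} (hx : x ≠ 0)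
    {μ : ℝ} (h : A *ᵥ x = (μ : ℂ) • x) : ∃ i, hA.eigenvalues i = μ := by
  have hμ : (μ : ℂ) ∈ spectrum ℂ A := by
    rw [← spectrum_toLin', ← Module.End.hasEigenvalue_iff_mem_spectrum]
    exact Module.End.hasEigenvalue_of_hasEigenvector
      ⟨by simpa [Module.End.mem_eigenspace_iff] using h, hx⟩
  obtain ⟨_, ⟨i, rfl⟩, hi⟩ := hA.spectrum_eq_image_range ▸ hμ
  exact ⟨i, Complex.ofReal_injective hi⟩

lemma Matrix.IsHermitian.exists_top_unit_eigenvector [Nonempty ι] (hA : A.IsHermitian) :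
    ∃ (ψ : ι → ℂ) (μ : ℝ), star ψ ⬝ᵥ ψ = 1 ∧ A *ᵥ ψ = (μ : ℂ) • ψ ∧
      ∀ i, hA.eigenvalues i ≤ μ := by
  obtain ⟨i₀, -, hmax⟩ := Finset.exists_max_image Finset.univ hA.eigenvalues Finset.univ_nonempty
  refine ⟨⇑(hA.eigenvectorBasis i₀), hA.eigenvalues i₀, ?_, ?_, fun i => hmax i (by simp)⟩
  · rw [dotProduct_comm, ← EuclideanSpace.inner_eq_star_dotProduct]
    exact hA.eigenvectorBasis.inner_eq_one i₀
  · rw [Complex.coe_smul]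
    exact hA.mulVec_eigenvectorBasis i₀

lemma Matrix.IsHermitian.nonneg_of_trace_eq_zero [Nonempty ι] (hA : A.IsHermitian)
    (htr : A.trace = 0) {μ : ℝ} (hμ : ∀ i, hA.eigenvalues i ≤ μ) : 0 ≤ μ := by
  have hsum : ∑ i, hA.eigenvalues i = 0 := by
    have := hA.trace_eq_sum_eigenvalues
    rw [htr, ← RCLike.ofReal_sum] at this
    exact RCLike.ofReal_eq_zero.1 this.symm
  have := Finset.sum_le_card_nsmul Finset.univ _ _ fun i _ => hμ i
  rw [hsum, Finset.card_univ, nsmul_eq_mul] at this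
  exact nonneg_of_mul_nonneg_right this (by exact_mod_cast Fintype.card_pos)

end MatrixFacts

section SpinTriple

variable {ι : Type*} [Fintype ι] [DecidableEq ι]

structure IsSpinTriple (X Y Z : Matrix ι ι ℂ) (j : ℝ) : Prop where
  isHermitian_X : X.IsHermitian
  isHermitian_Y : Y.IsHermitian
  isHermitian_Z : Z.IsHermitian
  commutator_XY : X * Y - Y * X = Complex.I • Z
  commutator_YZ : Y * Z - Z * Y = Complex.I • X
  commutator_ZX : Z * X - X * Z = Complex.I • Y
  casimir : X * X + Y * Y + Z * Z = ((j * (j + 1) : ℝ) : ℂ) • 1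

namespace IsSpinTriple

variable {X Y Z : Matrix ι ι ℂ} {j : ℝ} (h : IsSpinTriple X Y Z j)
include h

lemma conjTranspose_ladder_mul_ladder :
    (X + Complex.I • Y)ᴴ * (X + Complex.I • Y) = ((j * (j + 1) : ℝ) : ℂ) • 1 - Z * Z - Z := by
  rw [conjTranspose_add, conjTranspose_smul, h.isHermitian_X.eq, h.isHermitian_Y.eq,
    Complex.star_def, Complex.conj_I, ← h.casimir]
  simp only [add_mul, mul_add, smul_mul_assoc, mul_smul_comm]
  linear_combination (norm := module)
    Complex.I • h.commutator_XY + Complex.I_sq • Z - Complex.I_sq • (Y * Y)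

lemma commutator_ladder :
    Z * (X + Complex.I • Y) - (X + Complex.I • Y) * Z = X + Complex.I • Y := by
  simp only [add_mul, mul_add, smul_mul_assoc, mul_smul_comm]
  linear_combination (norm := module)
    h.commutator_ZX - Complex.I • h.commutator_YZ - Complex.I_sq • X

lemma le_of_trace_mul_eq (hj : 0 ≤ j) {ρ : Matrix ι ι ℂ} (hρ : ρ.PosSemidef) (hρ1 : ρ.trace = 1)
    {e : ℝ} (he : (Z * ρ).trace = e) : e ≤ j := by
  have hsum : (X + Complex.I • Y)ᴴ * (X + Complex.I • Y) + (Z - (e : ℂ) • 1)ᴴ * (Z - (e : ℂ) • 1)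
      = ((j * (j + 1) + e ^ 2 : ℝ) : ℂ) • 1 - ((1 + 2 * e : ℝ) : ℂ) • Z := by
    rw [h.conjTranspose_ladder_mul_ladder, conjTranspose_sub, h.isHermitian_Z.eq,
      conjTranspose_smul, conjTranspose_one, Complex.star_def, Complex.conj_ofReal]
    simp only [sub_mul, mul_sub, smul_mul_assoc, mul_smul_comm, one_mul, mul_one]
    push_cast
    module
  have h0 := add_nonneg (trace_conjTranspose_mul_self_mul_nonneg (X + Complex.I • Y) hρ)
    (trace_conjTranspose_mul_self_mul_nonneg (Z - (e : ℂ) • 1) hρ)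
  rw [← trace_add, ← add_mul, hsum, sub_mul, trace_sub, smul_mul_assoc, smul_mul_assoc, one_mul,
    trace_smul, trace_smul, hρ1, he, smul_eq_mul, smul_eq_mul, mul_one, ← Complex.ofReal_mul,
    ← Complex.ofReal_sub, Complex.zero_le_real] at h0
  nlinarith

lemma ladder_mulVec_eq_zero {ψ : ι → ℂ} {μ : ℝ} (hψ : Z *ᵥ ψ = (μ : ℂ) • ψ)
    (hμ : ∀ i, h.isHermitian_Z.eigenvalues i ≤ μ) : (X + Complex.I • Y) *ᵥ ψ = 0 := by
  by_contra hne
  have hraise : Z *ᵥ ((X + Complex.I • Y) *ᵥ ψ)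
      = ((μ + 1 : ℝ) : ℂ) • ((X + Complex.I • Y) *ᵥ ψ) := by
    rw [mulVec_mulVec, ← sub_add_cancel (Z * _) ((X + Complex.I • Y) * Z), h.commutator_ladder,
      add_mulVec, ← mulVec_mulVec, hψ, mulVec_smul]
    push_cast
    module
  obtain ⟨i, hi⟩ := h.isHermitian_Z.exists_eigenvalues_eq hne hraise
  linarith [hμ i]

lemma eigenvalue_mul_succ_eq {ψ : ι → ℂ} (hψ0 : ψ ≠ 0) {μ : ℝ} (hψ : Z *ᵥ ψ = (μ : ℂ) • ψ)
    (hladder : (X + Complex.I • Y) *ᵥ ψ = 0) : μ * (μ + 1) = j * (j + 1) := by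
  have h0 := congrArg (· *ᵥ ψ) h.conjTranspose_ladder_mul_ladder
  rw [← mulVec_mulVec, hladder, mulVec_zero, sub_mulVec, sub_mulVec, smul_mulVec, one_mulVec,
    ← mulVec_mulVec, hψ, mulVec_smul, hψ, smul_smul, ← sub_smul, ← sub_smul, eq_comm,
    smul_eq_zero] at h0
  have h1 := h0.resolve_right hψ0
  push_cast at h1
  exact_mod_cast (by linear_combination -h1 : (μ * (μ + 1) : ℂ) = j * (j + 1))

lemma exists_highest_weight [Nonempty ι] (hj : 0 ≤ j) :
    ∃ ψ : ι → ℂ, star ψ ⬝ᵥ ψ = 1 ∧ Z *ᵥ ψ = (j : ℂ) • ψ ∧ (X + Complex.I • Y) *ᵥ ψ = 0 := by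
  obtain ⟨ψ, μ, hnorm, hψ, hμ⟩ := h.isHermitian_Z.exists_top_unit_eigenvector
  have hψ0 : ψ ≠ 0 := by
    rintro rfl
    simp at hnorm
  have hladder := h.ladder_mulVec_eq_zero hψ hμ
  have hμj := h.eigenvalue_mul_succ_eq hψ0 hψ hladder
  have hμ0 := h.isHermitian_Z.nonneg_of_trace_eq_zero
    (trace_eq_zero_of_commutator_eq_I_smul h.commutator_XY) hμ
  obtain rfl : μ = j := by nlinarith
  exact ⟨ψ, hnorm, hψ, hladder⟩

lemma exists_fully_polarized_state [Nonempty ι] (hj : 0 ≤ j) :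
    ∃ ρ : Matrix ι ι ℂ, ρ.PosSemidef ∧ ρ.trace = 1 ∧
      (X * ρ).trace = 0 ∧ (Y * ρ).trace = 0 ∧ (Z * ρ).trace = j := by
  obtain ⟨ψ, hnorm, hZψ, hladder⟩ := h.exists_highest_weight hj
  refine ⟨vecMulVec ψ (star ψ), posSemidef_vecMulVec_self_star ψ, ?_, ?_⟩
  · rw [trace_vecMulVec, dotProduct_comm, hnorm]
  simp only [trace_mul_vecMulVec_star, hZψ, dotProduct_smul, hnorm, smul_eq_mul, mul_one,
    and_true]
  have hX := h.isHermitian_X.im_star_dotProduct_mulVec_self ψ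
  have hY := h.isHermitian_Y.im_star_dotProduct_mulVec_self ψ
  have hA := congrArg (star ψ ⬝ᵥ ·) hladder
  simp only [add_mulVec, smul_mulVec, dotProduct_add, dotProduct_smul, dotProduct_zero] at hA
  -- `⟨X⟩ + i ⟨Y⟩ = 0` with both expectation values real
  simp_all [Complex.ext_iff]

end IsSpinTriple

end SpinTriple

section SpinAlong

variable {ι κ : Type*} [Fintype κ]

noncomputable def spinAlong (L : κ → Matrix ι ι ℂ) (c : κ → ℝ) : Matrix ι ι ℂ := ∑ k, c k • L k

lemma isHermitian_spinAlong {L : κ → Matrix ι ι ℂ} (herm : ∀ k, (L k).IsHermitian) (c : κ → ℝ) :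
    (spinAlong L c).IsHermitian :=
  isSelfAdjoint_sum _ fun k _ => (IsSelfAdjoint.all (c k)).smul (herm k).isSelfAdjoint

lemma trace_spinAlong_mul [Fintype ι] (L : κ → Matrix ι ι ℂ) (c : κ → ℝ) (ρ : Matrix ι ι ℂ) :
    (spinAlong L c * ρ).trace = ∑ k, c k • (L k * ρ).trace := by
  simp [spinAlong, Finset.sum_mul, trace_sum]

variable [DecidableEq κ] {R : Matrix κ κ ℝ}

lemma sum_spinAlong_mul_self [Fintype ι] (L : κ → Matrix ι ι ℂ) (hR : Rᵀ * R = 1) :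
    ∑ i, spinAlong L (R i) * spinAlong L (R i) = ∑ k, L k * L k := by
  simp only [spinAlong, Finset.sum_mul_sum, smul_mul_smul_comm]
  rw [Finset.sum_comm]
  refine Finset.sum_congr rfl fun k _ => ?_
  rw [Finset.sum_comm]
  simp [← Finset.sum_smul, sum_mul_eq_ite_of_transpose_mul_self_eq_one hR]

lemma sum_smul_spinAlong (L : κ → Matrix ι ι ℂ) (hR : Rᵀ * R = 1) (k : κ) :
    ∑ i, R i k • spinAlong L (R i) = L k := by
  simp only [spinAlong, Finset.smul_sum, smul_smul]
  rw [Finset.sum_comm]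
  simp [← Finset.sum_smul, sum_mul_eq_ite_of_transpose_mul_self_eq_one hR]

end SpinAlong

lemma spinAlong_commutator {ι : Type*} [Fintype ι] {L : Fin 3 → Matrix ι ι ℂ}
    (comm : ∀ k l, L k * L l - L l * L k = Complex.I • ∑ m, (leviCivita k l m : ℂ) • L m)
    (c d : Fin 3 → ℝ) :
    spinAlong L c * spinAlong L d - spinAlong L d * spinAlong L c
      = Complex.I • spinAlong L (c ⨯₃ d) := by
  have c01 := comm 0 1
  have c12 := comm 1 2
  have c20 := comm 2 0
  simp +decide [leviCivita] at c01 c12 c20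
  simp only [spinAlong, Fin.sum_univ_three, cross_apply, ← Complex.coe_smul, add_mul, mul_add,
    smul_mul_assoc, mul_smul_comm]
  push_cast
  linear_combination (norm := module) ((c 0 * d 1 - c 1 * d 0 : ℝ) : ℂ) • c01
    + ((c 1 * d 2 - c 2 * d 1 : ℝ) : ℂ) • c12 + ((c 2 * d 0 - c 0 * d 2 : ℝ) : ℂ) • c20

section Expectation

variable {ι κ : Type*} [Fintype ι]

def expectationSet (L : κ → Matrix ι ι ℂ) : Set (κ → ℝ) :=
  {v | ∃ ρ : Matrix ι ι ℂ, ρ.PosSemidef ∧ ρ.trace = 1 ∧ ∀ k, (L k * ρ).trace = v k}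

lemma convex_expectationSet (L : κ → Matrix ι ι ℂ) : Convex ℝ (expectationSet L) := by
  rintro v ⟨ρ, hρ, hρ1, hv⟩ w ⟨σ, hσ, hσ1, hw⟩ a b ha hb hab
  refine ⟨a • ρ + b • σ, (hρ.smul ha).add (hσ.smul hb), ?_, fun k => ?_⟩
  · simp [hρ1, hσ1, ← Complex.ofReal_add, hab]
  · simp [mul_add, hv, hw, Complex.real_smul]

end Expectation

section SpinSystem

variable {ι : Type*} [Fintype ι] [DecidableEq ι] {L : Fin 3 → Matrix ι ι ℂ} {j : ℝ}
  (herm : ∀ k, (L k).IsHermitian)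
  (comm : ∀ k l, L k * L l - L l * L k = Complex.I • ∑ m, (leviCivita k l m : ℂ) • L m)
  (casimir : ∑ k, L k * L k = ((j * (j + 1) : ℝ) : ℂ) • 1)
include herm comm casimir

lemma isSpinTriple_spinAlong {R : Matrix (Fin 3) (Fin 3) ℝ} (hR : Rᵀ * R = 1)
    (h01 : R 0 ⨯₃ R 1 = R 2) (h12 : R 1 ⨯₃ R 2 = R 0) (h20 : R 2 ⨯₃ R 0 = R 1) :
    IsSpinTriple (spinAlong L (R 0)) (spinAlong L (R 1)) (spinAlong L (R 2)) j where
  isHermitian_X := isHermitian_spinAlong herm _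
  isHermitian_Y := isHermitian_spinAlong herm _
  isHermitian_Z := isHermitian_spinAlong herm _
  commutator_XY := by rw [spinAlong_commutator comm, h01]
  commutator_YZ := by rw [spinAlong_commutator comm, h12]
  commutator_ZX := by rw [spinAlong_commutator comm, h20]
  casimir := by rw [← casimir, ← sum_spinAlong_mul_self L hR, Fin.sum_univ_three]

lemma sqrt_dotProduct_self_le_of_mem_expectationSet (hj : 0 ≤ j) {v : Fin 3 → ℝ}
    (hv : v ∈ expectationSet L) : √(v ⬝ᵥ v) ≤ j := by
  obtain ⟨ρ, hρ, hρ1, hρv⟩ := hv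
  obtain ⟨n, hn, hvn⟩ := exists_unit_smul_eq v
  obtain ⟨R, rfl, hR, h01, h12, h20⟩ := exists_rotation_of_dotProduct_self_eq_one n hn
  refine (isSpinTriple_spinAlong herm comm casimir hR h01 h12 h20).le_of_trace_mul_eq hj hρ hρ1 ?_
  have hnv : R 2 ⬝ᵥ v = √(v ⬝ᵥ v) := by
    conv_lhs => rw [hvn]
    rw [dotProduct_smul, hn, smul_eq_mul, mul_one]
  rw [trace_spinAlong_mul, ← hnv, dotProduct, Complex.ofReal_sum]
  simp [hρv, Complex.real_smul]

lemma smul_mem_expectationSet [Nonempty ι] (hj : 0 ≤ j) {n : Fin 3 → ℝ} (hn : n ⬝ᵥ n = 1) :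
    j • n ∈ expectationSet L := by
  obtain ⟨R, rfl, hR, h01, h12, h20⟩ := exists_rotation_of_dotProduct_self_eq_one n hn
  obtain ⟨ρ, hρ, hρ1, hX, hY, hZ⟩ :=
    (isSpinTriple_spinAlong herm comm casimir hR h01 h12 h20).exists_fully_polarized_state hj
  refine ⟨ρ, hρ, hρ1, fun k => ?_⟩
  rw [← sum_smul_spinAlong L hR k, Finset.sum_mul, trace_sum]
  simp [Fin.sum_univ_three, hX, hY, hZ, Complex.real_smul, mul_comm]

lemma mem_expectationSet_of_sqrt_dotProduct_self_le [Nonempty ι] (hj : 0 ≤ j) {v : Fin 3 → ℝ}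
    (hv : √(v ⬝ᵥ v) ≤ j) : v ∈ expectationSet L := by
  obtain ⟨n, hn, hvn⟩ := exists_unit_smul_eq v
  have hjn := smul_mem_expectationSet herm comm casimir hj hn
  have hzero : (0 : Fin 3 → ℝ) ∈ expectationSet L := by
    have hneg := smul_mem_expectationSet herm comm casimir hj (by simpa : -n ⬝ᵥ -n = 1)
    simpa using convex_expectationSet L hjn hneg (by norm_num : (0 : ℝ) ≤ 1 / 2)
      (by norm_num : (0 : ℝ) ≤ 1 / 2) (by norm_num)
  -- for `j = 0` this reads `0 = (0 / 0) • 0`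
  have hv' : v = (√(v ⬝ᵥ v) / j) • j • n := by
    rcases hj.eq_or_lt with rfl | hj
    · rw [hvn, le_antisymm hv (Real.sqrt_nonneg _)]
      simp
    · rw [smul_smul, div_mul_cancel₀ _ hj.ne', ← hvn]
  rw [hv']
  exact (convex_expectationSet L).smul_mem_of_zero_mem hzero hjn
    ⟨by positivity, div_le_one_of_le₀ hv hj⟩

end SpinSystem

theorem first_moment_problem_general (ℓ : ℕ) (L : Fin 3 → Matrix (Fin (ℓ + 1)) (Fin (ℓ + 1)) ℂ)
    (herm : ∀ k, (L k).IsHermitian)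
    (comm : ∀ k l, L k * L l - L l * L k =
      Complex.I • ∑ m, (leviCivita k l m : ℂ) • L m)
    (casimir : ∑ k, L k * L k
      = ((((ℓ : ℝ) / 2) * ((ℓ : ℝ) / 2 + 1) : ℝ) : ℂ) • (1 : Matrix (Fin (ℓ + 1)) (Fin (ℓ + 1)) ℂ))
    (v : Fin 3 → ℝ) :
    (∃ ρ : Matrix (Fin (ℓ + 1)) (Fin (ℓ + 1)) ℂ, ρ.PosSemidef ∧ ρ.trace = 1 ∧
        ∀ k, (L k * ρ).trace = ((v k : ℝ) : ℂ))
      ↔ ∑ k, (v k) ^ 2 ≤ ((ℓ : ℝ) / 2) ^ 2 := by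
  have hj : (0 : ℝ) ≤ ℓ / 2 := by positivity
  have hv : ∑ k, v k ^ 2 = v ⬝ᵥ v := by simp [dotProduct, sq]
  change v ∈ expectationSet L ↔ _
  rw [hv, ← Real.sqrt_le_left hj]
  exact ⟨sqrt_dotProduct_self_le_of_mem_expectationSet herm comm casimir hj,
    mem_expectationSet_of_sqrt_dotProduct_self_le herm comm casimir hj⟩

/-- First moment problem: real numbers `L₁, L₂, L₃` are the expectation values
`tr(L_k^{(j)} ρ)` of the spin-`j` operators (here `j = ℓ/2`, dimension `ℓ+1`) for some
density operator `ρ` if and only if `L₁² + L₂² + L₃² ≤ j²`. -/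
theorem first_moment_problem (ℓ : ℕ) (L : Fin 3 → Matrix (Fin (ℓ + 1)) (Fin (ℓ + 1)) ℂ)
    (herm : ∀ k, (L k).IsHermitian)
    (comm : ∀ k l, L k * L l - L l * L k =
      Complex.I • ∑ m, (leviCivita k l m : ℂ) • L m)
    (casimir : ∑ k, L k * L k
      = ((((ℓ : ℝ) / 2) * ((ℓ : ℝ) / 2 + 1) : ℝ) : ℂ) • (1 : Matrix (Fin (ℓ + 1)) (Fin (ℓ + 1)) ℂ))
    (irred : ∀ X : Matrix (Fin (ℓ + 1)) (Fin (ℓ + 1)) ℂ,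
      (∀ k, X * L k = L k * X) → ∃ c : ℂ, X = c • (1 : Matrix (Fin (ℓ + 1)) (Fin (ℓ + 1)) ℂ))
    (v : Fin 3 → ℝ) :
    (∃ ρ : Matrix (Fin (ℓ + 1)) (Fin (ℓ + 1)) ℂ, ρ.PosSemidef ∧ ρ.trace = 1 ∧
        ∀ k, (L k * ρ).trace = ((v k : ℝ) : ℂ))
      ↔ ∑ k, (v k) ^ 2 ≤ ((ℓ : ℝ) / 2) ^ 2 :=
  first_moment_problem_general ℓ L herm comm casimir v
end

section
/- Every separable density operator ρ on ℂ²⊗ℂ² supported on the symmetric subspace admits a decomposition ρ = ∑_i p_i |α_i⟩⟨α_i| ⊗ |α_i⟩⟨α_i| into symmetric pure product states; consequently, ρ has a Bose-symmetric extension to any number N ≥ 2 of qubits, namely ω = ∑_i p_i |α_i⟩⟨α_i|^{⊗N}, a density operator supported on the symmetric subspace of (ℂ²)^{⊗N} whose partial trace over the last N−2 factors equals ρ. -/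
open Matrix
open scoped ComplexOrder Kronecker

/-- The rank-one projector `|α⟩⟨α|` of a qubit vector. -/
noncomputable def proj (α : Fin 2 → ℂ) : Matrix (Fin 2) (Fin 2) ℂ :=
  Matrix.of fun i j => α i * star (α j)

/-- The swap operator on `ℂ² ⊗ ℂ²`. -/
def swapMat : Matrix (Fin 2 × Fin 2) (Fin 2 × Fin 2) ℂ :=
  Matrix.of fun p q => if p.1 = q.2 ∧ p.2 = q.1 then 1 else 0

/-- The permutation operator `π(p)` on `(ℂ²)^{⊗N}`. -/
noncomputable def permMat (N : ℕ) (p : Equiv.Perm (Fin N)) :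
    Matrix (Fin N → Fin 2) (Fin N → Fin 2) ℂ :=
  Matrix.of fun f g => if ∀ i, f (p i) = g i then 1 else 0

/-- Partial trace over the last `n` of `n+2` qubits, producing a two-qubit operator. -/
noncomputable def ptrace2 (n : ℕ)
    (ω : Matrix (Fin (n + 2) → Fin 2) (Fin (n + 2) → Fin 2) ℂ) :
    Matrix (Fin 2 × Fin 2) (Fin 2 × Fin 2) ℂ :=
  Matrix.of fun p q => ∑ t : Fin n → Fin 2,
    ω (Fin.cons p.1 (Fin.cons p.2 t)) (Fin.cons q.1 (Fin.cons q.2 t))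

/-!
For `a, b ∈ ℂ²` one has `tr ((1 - F) (|a⟩⟨a| ⊗ |b⟩⟨b|)) = |a₀b₁ - a₁b₀|²`, where `F` is
the swap. Hence `Fρ = ρ` makes `∑ pᵢ |αᵢ,₀βᵢ,₁ - αᵢ,₁βᵢ,₀|²` vanish, so every term of positive weight
has `βᵢ` a phase multiple of `αᵢ` and `ρ = ∑ pᵢ |αᵢ⟩⟨αᵢ|^{⊗2}`. The tensor powers `|αᵢ⟩^{⊗N}` are
permutation-invariant unit vectors whose two-qubit marginal is `|αᵢ⟩⟨αᵢ|^{⊗2}`, so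
`∑ pᵢ |αᵢ⟩⟨αᵢ|^{⊗N}` is a Bose-symmetric extension of `ρ`.
-/

section Decomposition

theorem trace_sub_trace_swapMat_mul_kronecker_proj (a b : Fin 2 → ℂ) :
    (proj a ⊗ₖ proj b).trace - (swapMat * (proj a ⊗ₖ proj b)).trace
      = Complex.normSq (a 0 * b 1 - a 1 * b 0) := by
  rw [← Complex.mul_conj]
  simp only [trace, diag_apply, proj, swapMat, kroneckerMap_apply, of_apply, Matrix.mul_apply,
    Fintype.sum_prod_type, Fin.sum_univ_two, Fin.isValue, RCLike.star_def, map_sub, map_mul,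
    and_true, and_false, ↓reduceIte, zero_ne_one, one_ne_zero, ite_mul, one_mul, zero_mul,
    add_zero, zero_add]
  ring

theorem proj_smul (c : ℂ) (a : Fin 2 → ℂ) : proj (c • a) = (Complex.normSq c : ℂ) • proj a := by
  ext i j
  simp only [proj, Matrix.of_apply, Matrix.smul_apply, Pi.smul_apply, smul_eq_mul, star_mul',
    ← Complex.mul_conj, Complex.star_def]
  ring

variable {a b : Fin 2 → ℂ}

theorem eq_smul_of_mul_eq_mul (ha : ∑ x, Complex.normSq (a x) = 1)
    (h : a 0 * b 1 = a 1 * b 0) : b = (star a ⬝ᵥ b) • a := by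
  have ha' : starRingEnd ℂ (a 0) * a 0 + starRingEnd ℂ (a 1) * a 1 = 1 := by
    simp only [Fin.sum_univ_two] at ha
    simp only [mul_comm (starRingEnd ℂ _), Complex.mul_conj]
    exact_mod_cast ha
  ext x
  fin_cases x <;>
    simp only [Fin.zero_eta, Fin.mk_one, Fin.isValue, dotProduct, Pi.star_apply, RCLike.star_def,
      Fin.sum_univ_two, Pi.smul_apply, smul_eq_mul]
  · linear_combination (-b 0) * ha' - starRingEnd ℂ (a 1) * h
  · linear_combination (-b 1) * ha' + starRingEnd ℂ (a 0) * h

theorem proj_eq_of_mul_eq_mul (ha : ∑ x, Complex.normSq (a x) = 1)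
    (hb : ∑ x, Complex.normSq (b x) = 1) (h : a 0 * b 1 = a 1 * b 0) : proj b = proj a := by
  set c := star a ⬝ᵥ b
  have hab : b = c • a := eq_smul_of_mul_eq_mul ha h
  have hc : Complex.normSq c = 1 := by
    simpa [hab, Complex.normSq_mul, ← Finset.mul_sum, ha] using hb
  rw [hab, proj_smul, hc, Complex.ofReal_one, one_smul]

theorem sum_smul_kronecker_proj_eq_of_swapMat_mul {ι : Type*} [Fintype ι] {p : ι → ℝ}
    {α β : ι → Fin 2 → ℂ} (hp : ∀ i, 0 ≤ p i) (hα : ∀ i, ∑ x, Complex.normSq (α i x) = 1)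
    (hβ : ∀ i, ∑ x, Complex.normSq (β i x) = 1)
    (hswap : swapMat * ∑ i, (p i : ℂ) • (proj (α i) ⊗ₖ proj (β i))
      = ∑ i, (p i : ℂ) • (proj (α i) ⊗ₖ proj (β i))) :
    ∑ i, (p i : ℂ) • (proj (α i) ⊗ₖ proj (β i))
      = ∑ i, (p i : ℂ) • (proj (α i) ⊗ₖ proj (α i)) := by
  set D : ι → ℂ := fun i => α i 0 * β i 1 - α i 1 * β i 0
  have hdefect : ∑ i, p i * Complex.normSq (D i) = 0 := by
    have h := congrArg Matrix.trace hswap.symm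
    simp only [Matrix.mul_sum, Matrix.mul_smul, Matrix.trace_sum, Matrix.trace_smul,
      smul_eq_mul] at h
    rw [← sub_eq_zero, ← Finset.sum_sub_distrib] at h
    simp only [← mul_sub, trace_sub_trace_swapMat_mul_kronecker_proj] at h
    exact_mod_cast h
  have hD : ∀ i, p i ≠ 0 → D i = 0 := fun i hi => by
    have := (Finset.sum_eq_zero_iff_of_nonneg fun i _ =>
      mul_nonneg (hp i) (Complex.normSq_nonneg (D i))).mp hdefect i (Finset.mem_univ i)
    simpa [hi] using this
  refine Finset.sum_congr rfl fun i _ => ?_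
  rcases eq_or_ne (p i) 0 with hi | hi
  · simp [hi]
  · rw [proj_eq_of_mul_eq_mul (hα i) (hβ i) (sub_eq_zero.mp (hD i hi))]

end Decomposition

section TensorPower

variable {κ : Type*}

def tensorPow (v : κ → ℂ) (N : ℕ) : (Fin N → κ) → ℂ := fun f => ∏ s, v (f s)

theorem tensorPow_dotProduct_star [Fintype κ] (v : κ → ℂ) (N : ℕ) :
    tensorPow v N ⬝ᵥ star (tensorPow v N) = (v ⬝ᵥ star v) ^ N := by
  simp only [dotProduct, tensorPow, Pi.star_apply, star_prod, ← Finset.prod_mul_distrib,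
    Fintype.sum_pow]

theorem tensorPow_comp_perm (v : κ → ℂ) {N : ℕ} (σ : Equiv.Perm (Fin N)) (f : Fin N → κ) :
    tensorPow v N (f ∘ σ) = tensorPow v N f :=
  Equiv.prod_comp σ fun s => v (f s)

theorem tensorPow_cons (v : κ → ℂ) {N : ℕ} (a : κ) (t : Fin N → κ) :
    tensorPow v (N + 1) (Fin.cons a t) = v a * tensorPow v N t := by
  simp [tensorPow, Fin.prod_univ_succ]

theorem dotProduct_star_self_eq_one [Fintype κ] {v : κ → ℂ}
    (hv : ∑ x, Complex.normSq (v x) = 1) : v ⬝ᵥ star v = 1 := by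
  simp only [dotProduct, Pi.star_apply, Complex.star_def, Complex.mul_conj]
  exact_mod_cast hv

end TensorPower

theorem permMat_mulVec {N : ℕ} (σ : Equiv.Perm (Fin N)) (w : (Fin N → Fin 2) → ℂ) :
    permMat N σ *ᵥ w = fun f => w (f ∘ σ) := by
  ext f
  simp only [mulVec, dotProduct, permMat, ← funext_iff, of_apply, ite_mul, one_mul, zero_mul,
    Finset.sum_ite_eq, Finset.mem_univ, ↓reduceIte]
  rfl

theorem vecMul_permMat {N : ℕ} (σ : Equiv.Perm (Fin N)) (w : (Fin N → Fin 2) → ℂ) :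
    w ᵥ* permMat N σ = fun g => w (g ∘ σ.symm) := by
  ext g
  have : ∀ f : Fin N → Fin 2, (∀ i, f (σ i) = g i) ↔ f = g ∘ σ.symm := fun f => by
    rw [← funext_iff, Equiv.eq_comp_symm]; rfl
  simp [permMat, vecMul, dotProduct, this]

theorem permMat_mulVec_tensorPow {N : ℕ} (σ : Equiv.Perm (Fin N)) (v : Fin 2 → ℂ) :
    permMat N σ *ᵥ tensorPow v N = tensorPow v N := by
  rw [permMat_mulVec]
  exact funext (tensorPow_comp_perm v σ)

theorem star_tensorPow_vecMul_permMat {N : ℕ} (σ : Equiv.Perm (Fin N)) (v : Fin 2 → ℂ) :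
    star (tensorPow v N) ᵥ* permMat N σ = star (tensorPow v N) := by
  rw [vecMul_permMat]
  exact funext fun g => congrArg star (tensorPow_comp_perm v σ.symm g)

theorem ptrace2_sum_smul {ι : Type*} [Fintype ι] (n : ℕ) (c : ι → ℂ)
    (A : ι → Matrix (Fin (n + 2) → Fin 2) (Fin (n + 2) → Fin 2) ℂ) :
    ptrace2 n (∑ i, c i • A i) = ∑ i, c i • ptrace2 n (A i) := by
  ext p q
  simp only [ptrace2, Matrix.of_apply, Matrix.sum_apply, Matrix.smul_apply, smul_eq_mul,
    Finset.mul_sum]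
  exact Finset.sum_comm

theorem ptrace2_vecMulVec_tensorPow (n : ℕ) (v : Fin 2 → ℂ) :
    ptrace2 n (vecMulVec (tensorPow v (n + 2)) (star (tensorPow v (n + 2))))
      = (v ⬝ᵥ star v) ^ n • (proj v ⊗ₖ proj v) := by
  ext p q
  rw [← tensorPow_dotProduct_star]
  simp only [ptrace2, of_apply, vecMulVec_apply, Pi.star_apply, tensorPow_cons, star_mul',
    dotProduct, Matrix.smul_apply, smul_eq_mul, Finset.sum_mul, kroneckerMap_apply, proj]
  refine Finset.sum_congr rfl fun t _ => ?_
  ring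

section BoseExtension

variable {ι κ : Type*} [Fintype ι] [Fintype κ] (q : ι → ℝ)

noncomputable def boseExtension (γ : ι → κ → ℂ) (N : ℕ) :
    Matrix (Fin N → κ) (Fin N → κ) ℂ :=
  ∑ i, (q i : ℂ) • vecMulVec (tensorPow (γ i) N) (star (tensorPow (γ i) N))

variable {q}

theorem boseExtension_posSemidef (hq : ∀ i, 0 ≤ q i) (γ : ι → κ → ℂ) (N : ℕ) :
    (boseExtension q γ N).PosSemidef :=
  posSemidef_sum _ fun i _ =>
    (posSemidef_vecMulVec_self_star _).smul (Complex.zero_le_real.mpr (hq i))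

theorem trace_boseExtension (hq : ∑ i, q i = 1) {γ : ι → κ → ℂ}
    (hγ : ∀ i, ∑ x, Complex.normSq (γ i x) = 1) (N : ℕ) :
    (boseExtension q γ N).trace = 1 := by
  simp only [boseExtension, trace_sum, trace_smul, trace_vecMulVec, tensorPow_dotProduct_star,
    dotProduct_star_self_eq_one (hγ _), one_pow, smul_eq_mul, mul_one]
  exact_mod_cast hq

theorem permMat_mul_boseExtension {N : ℕ} (σ : Equiv.Perm (Fin N)) (γ : ι → Fin 2 → ℂ) :
    permMat N σ * boseExtension q γ N = boseExtension q γ N := by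
  simp only [boseExtension, Finset.mul_sum, Matrix.mul_smul, mul_vecMulVec,
    permMat_mulVec_tensorPow]

theorem boseExtension_mul_permMat {N : ℕ} (σ : Equiv.Perm (Fin N)) (γ : ι → Fin 2 → ℂ) :
    boseExtension q γ N * permMat N σ = boseExtension q γ N := by
  simp only [boseExtension, Finset.sum_mul, Matrix.smul_mul, vecMulVec_mul,
    star_tensorPow_vecMul_permMat]

theorem ptrace2_boseExtension {γ : ι → Fin 2 → ℂ} (hγ : ∀ i, ∑ x, Complex.normSq (γ i x) = 1)
    (n : ℕ) :
    ptrace2 n (boseExtension q γ (n + 2)) = ∑ i, (q i : ℂ) • (proj (γ i) ⊗ₖ proj (γ i)) := by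
  simp only [boseExtension, ptrace2_sum_smul, ptrace2_vecMulVec_tensorPow,
    dotProduct_star_self_eq_one (hγ _), one_pow, one_smul]

end BoseExtension

/-- Every separable two-qubit density operator supported on the symmetric subspace admits a
decomposition `ρ = ∑ q_i |γ_i⟩⟨γ_i| ⊗ |γ_i⟩⟨γ_i|` into symmetric pure product states, and
consequently has a Bose-symmetric extension `ω = ∑ q_i |γ_i⟩⟨γ_i|^{⊗N}` to any number
`N = n+2 ≥ 2` of qubits: `ω` is a density operator supported on the symmetric subspace of
`(ℂ²)^{⊗N}` whose partial trace over the last `N−2` factors is `ρ`. -/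
theorem separable_symmetric_bose_extension (m : ℕ) (p : Fin m → ℝ)
    (α β : Fin m → Fin 2 → ℂ)
    (hp : ∀ i, 0 ≤ p i) (hps : ∑ i, p i = 1)
    (hα : ∀ i, ∑ x, Complex.normSq (α i x) = 1)
    (hβ : ∀ i, ∑ x, Complex.normSq (β i x) = 1)
    (ρ : Matrix (Fin 2 × Fin 2) (Fin 2 × Fin 2) ℂ)
    (hρ : ρ = ∑ i, ((p i : ℝ) : ℂ) • (proj (α i) ⊗ₖ proj (β i)))
    (hsupp : swapMat * ρ = ρ ∧ ρ * swapMat = ρ) :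
    ∃ (m' : ℕ) (q : Fin m' → ℝ) (γ : Fin m' → Fin 2 → ℂ),
      (∀ i, 0 ≤ q i) ∧ (∑ i, q i = 1) ∧ (∀ i, ∑ x, Complex.normSq (γ i x) = 1) ∧
      ρ = ∑ i, ((q i : ℝ) : ℂ) • (proj (γ i) ⊗ₖ proj (γ i)) ∧
      ∀ n : ℕ,
        (∑ i, ((q i : ℝ) : ℂ) • (Matrix.of fun f g : Fin (n + 2) → Fin 2 =>
            (∏ s, γ i (f s)) * star (∏ s, γ i (g s)))).PosSemidef ∧
        (∑ i, ((q i : ℝ) : ℂ) • (Matrix.of fun f g : Fin (n + 2) → Fin 2 =>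
            (∏ s, γ i (f s)) * star (∏ s, γ i (g s)))).trace = 1 ∧
        (∀ pp : Equiv.Perm (Fin (n + 2)),
          permMat (n + 2) pp * (∑ i, ((q i : ℝ) : ℂ) • (Matrix.of fun f g : Fin (n + 2) → Fin 2 =>
              (∏ s, γ i (f s)) * star (∏ s, γ i (g s))))
            = ∑ i, ((q i : ℝ) : ℂ) • (Matrix.of fun f g : Fin (n + 2) → Fin 2 =>
              (∏ s, γ i (f s)) * star (∏ s, γ i (g s))) ∧
          (∑ i, ((q i : ℝ) : ℂ) • (Matrix.of fun f g : Fin (n + 2) → Fin 2 =>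
              (∏ s, γ i (f s)) * star (∏ s, γ i (g s)))) * permMat (n + 2) pp
            = ∑ i, ((q i : ℝ) : ℂ) • (Matrix.of fun f g : Fin (n + 2) → Fin 2 =>
              (∏ s, γ i (f s)) * star (∏ s, γ i (g s)))) ∧
        ptrace2 n (∑ i, ((q i : ℝ) : ℂ) • (Matrix.of fun f g : Fin (n + 2) → Fin 2 =>
            (∏ s, γ i (f s)) * star (∏ s, γ i (g s)))) = ρ := by
  have hsym : ρ = ∑ i, (p i : ℂ) • (proj (α i) ⊗ₖ proj (α i)) := by
    subst hρ
    exact sum_smul_kronecker_proj_eq_of_swapMat_mul hp hα hβ hsupp.1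
  refine ⟨m, p, α, hp, hps, hα, hsym, fun n => ?_⟩
  exact ⟨boseExtension_posSemidef hp α (n + 2), trace_boseExtension hps hα (n + 2),
    fun σ => ⟨permMat_mul_boseExtension σ α, boseExtension_mul_permMat σ α⟩,
    (ptrace2_boseExtension hα n).trans hsym.symm⟩
end

section
/- Any 3×3 complex matrix M of the form M(ρ)_{kl} = tr(L_k^{(j)} L_l^{(j)} ρ) for a density operator ρ can, by conjugation with a real orthogonal matrix arising from the adjoint action of SU(2), be brought to standard form M = D + iA where D is a real diagonal matrix with tr(D) = j(j+1) and iA is the anti-Hermitian traceless part. -/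
open Matrix
open scoped ComplexOrder

/-!
Since `L_k`, `L_l` and `ρ` are Hermitian, `M(ρ)_{lk} = conj M(ρ)_{kl}`, so `M(ρ) = S + iA` with
`S` real symmetric and `A` real antisymmetric. Conjugating by a real rotation `R` preserves this
splitting, and the spectral theorem gives a rotation diagonalising `S`. The trace of the diagonal
part is `tr S = tr M(ρ)`, which the Casimir identity `∑ L_k² = j(j+1)` and `tr ρ = 1` turn into
`j(j+1)`.
-/

namespace Matrix

section

variable {n : Type*}

lemma map_re_add_I_smul_map_im {m : Type*} (M : Matrix m n ℂ) :
    (M.map Complex.re).map (fun x : ℝ => (x : ℂ))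
      + Complex.I • (M.map Complex.im).map (fun x : ℝ => (x : ℂ)) = M := by
  ext k l
  simp [mul_comm Complex.I, Complex.re_add_im]

lemma IsHermitian.map_re {M : Matrix n n ℂ} (hM : M.IsHermitian) :
    (M.map Complex.re).IsHermitian := by
  ext k l
  simpa using congrArg Complex.re (hM.apply k l)

lemma IsHermitian.transpose_map_im {M : Matrix n n ℂ} (hM : M.IsHermitian) :
    (M.map Complex.im)ᵀ = -M.map Complex.im := by
  ext k l
  simpa using (congrArg Complex.im (hM.apply l k)).symm

variable [Fintype n]

lemma map_ofReal_mul {m o : Type*} (A : Matrix m n ℝ) (B : Matrix n o ℝ) :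
    (A * B).map (fun x : ℝ => (x : ℂ))
      = A.map (fun x : ℝ => (x : ℂ)) * B.map (fun x : ℝ => (x : ℂ)) :=
  Matrix.map_mul (f := Complex.ofRealHom)

variable [DecidableEq n]

section TrivialStar

variable {R : Type*} [CommRing R] [StarRing R] [TrivialStar R] {V : Matrix n n R}

lemma transpose_mul_self_of_mem_unitaryGroup (hV : V ∈ unitaryGroup n R) : Vᵀ * V = 1 := by
  simpa [star_eq_conjTranspose, conjTranspose_eq_transpose_of_trivial]
    using mem_unitaryGroup_iff'.mp hV

lemma det_mul_self_of_mem_unitaryGroup (hV : V ∈ unitaryGroup n R) : V.det * V.det = 1 := by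
  simpa using Unitary.star_mul_self_of_mem (det_of_mem_unitary hV)

end TrivialStar

lemma IsHermitian.transpose_eigenvectorUnitary_mul_mul_eigenvectorUnitary {S : Matrix n n ℝ}
    (hS : S.IsHermitian) :
    (hS.eigenvectorUnitary : Matrix n n ℝ)ᵀ * S * hS.eigenvectorUnitary
      = diagonal hS.eigenvalues := by
  simpa [Unitary.conjStarAlgAut_star_apply, star_eq_conjTranspose,
    conjTranspose_eq_transpose_of_trivial] using hS.conjStarAlgAut_star_eigenvectorUnitary

/-- The eigenvector matrix `V` is only orthogonal; multiplying one eigenvector by `det V = ±1`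
makes it a rotation without changing the diagonal form. -/
theorem IsHermitian.exists_rotation_conj_eq_diagonal [Nonempty n] {S : Matrix n n ℝ}
    (hS : S.IsHermitian) :
    ∃ R : Matrix n n ℝ, Rᵀ * R = 1 ∧ R.det = 1 ∧ R * S * Rᵀ = diagonal hS.eigenvalues := by
  set V : Matrix n n ℝ := ↑hS.eigenvectorUnitary
  have hVV : V * Vᵀ = 1 :=
    mul_eq_one_comm.mp (transpose_mul_self_of_mem_unitaryGroup hS.eigenvectorUnitary.2)
  have hdet : V.det * V.det = 1 := det_mul_self_of_mem_unitaryGroup hS.eigenvectorUnitary.2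
  set i₀ : n := Classical.arbitrary n
  set f : n → ℝ := Function.update 1 i₀ V.det
  have hf : ∀ i, f i * f i = 1 := by
    intro i
    by_cases hi : i = i₀ <;> simp [f, hi, hdet]
  have hF : diagonal f * diagonal f = 1 := by
    rw [diagonal_mul_diagonal, ← diagonal_one]
    exact congrArg diagonal (funext hf)
  refine ⟨diagonal f * Vᵀ, ?_, ?_, ?_⟩
  · calc (diagonal f * Vᵀ)ᵀ * (diagonal f * Vᵀ) = V * (diagonal f * diagonal f) * Vᵀ := by
          rw [transpose_mul, diagonal_transpose, transpose_transpose]; noncomm_ring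
      _ = 1 := by rw [hF, mul_one, hVV]
  · rw [det_mul, det_transpose, det_diagonal, Finset.prod_update_of_mem (Finset.mem_univ _)]
    simpa using hdet
  · calc diagonal f * Vᵀ * S * (diagonal f * Vᵀ)ᵀ
        = diagonal f * (Vᵀ * S * V) * diagonal f := by
          rw [transpose_mul, diagonal_transpose, transpose_transpose]; noncomm_ring
      _ = diagonal hS.eigenvalues := by
          rw [hS.transpose_eigenvectorUnitary_mul_mul_eigenvectorUnitary, diagonal_mul_diagonal,
            diagonal_mul_diagonal]
          congr 1
          funext i
          linear_combination hS.eigenvalues i * hf i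

theorem IsHermitian.exists_rotation_conj_eq_diagonal_add_I_smul [Nonempty n]
    {M : Matrix n n ℂ} (hM : M.IsHermitian) :
    ∃ (R D A : Matrix n n ℝ),
      Rᵀ * R = 1 ∧ R.det = 1 ∧
      (∀ k l, k ≠ l → D k l = 0) ∧
      D.trace = M.trace.re ∧
      Aᵀ = -A ∧
      R.map (fun x : ℝ => (x : ℂ)) * M * (R.map (fun x : ℝ => (x : ℂ)))ᵀ
        = D.map (fun x : ℝ => (x : ℂ)) + Complex.I • A.map (fun x : ℝ => (x : ℂ)) := by
  obtain ⟨R, hRR, hdet, hdiag⟩ := hM.map_re.exists_rotation_conj_eq_diagonal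
  refine ⟨R, diagonal hM.map_re.eigenvalues, R * M.map Complex.im * Rᵀ, hRR, hdet,
    fun k l => diagonal_apply_ne _, ?_, ?_, ?_⟩
  · rw [← hdiag, trace_mul_cycle, hRR, one_mul]
    simp [trace, Complex.re_sum]
  · rw [transpose_mul, transpose_mul, transpose_transpose, hM.transpose_map_im]
    noncomm_ring
  · conv_lhs => rw [← M.map_re_add_I_smul_map_im]
    rw [mul_add, add_mul, mul_smul_comm, smul_mul_assoc, ← hdiag, ← transpose_map]
    simp only [map_ofReal_mul]

end

variable {ι d α : Type*} [Fintype d]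

def secondMomentMatrix [Semiring α] (L : ι → Matrix d d α) (ρ : Matrix d d α) : Matrix ι ι α :=
  of fun k l => (L k * L l * ρ).trace

lemma isHermitian_secondMomentMatrix [CommSemiring α] [StarRing α]
    {L : ι → Matrix d d α} {ρ : Matrix d d α}
    (hL : ∀ k, (L k).IsHermitian) (hρ : ρ.IsHermitian) :
    (secondMomentMatrix L ρ).IsHermitian := by
  ext k l
  change star (L l * L k * ρ).trace = (L k * L l * ρ).trace
  rw [← trace_conjTranspose, conjTranspose_mul, conjTranspose_mul, hρ.eq, (hL k).eq, (hL l).eq,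
    trace_mul_comm]

lemma trace_secondMomentMatrix [Fintype ι] [Semiring α] (L : ι → Matrix d d α)
    (ρ : Matrix d d α) :
    (secondMomentMatrix L ρ).trace = ((∑ k, L k * L k) * ρ).trace := by
  rw [Finset.sum_mul, trace_sum]
  rfl

end Matrix

theorem expectation_value_matrix_standard_form_general (ℓ : ℕ)
    (L : Fin 3 → Matrix (Fin (ℓ + 1)) (Fin (ℓ + 1)) ℂ)
    (herm : ∀ k, (L k).IsHermitian)
    (casimir : ∑ k, L k * L k
      = ((((ℓ : ℝ) / 2) * ((ℓ : ℝ) / 2 + 1) : ℝ) : ℂ) • (1 : Matrix (Fin (ℓ + 1)) (Fin (ℓ + 1)) ℂ))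
    (ρ : Matrix (Fin (ℓ + 1)) (Fin (ℓ + 1)) ℂ)
    (hρ : ρ.PosSemidef) (htr : ρ.trace = 1) :
    ∃ (R D A : Matrix (Fin 3) (Fin 3) ℝ),
      Rᵀ * R = 1 ∧ R.det = 1 ∧
      (∀ k l, k ≠ l → D k l = 0) ∧
      D.trace = ((ℓ : ℝ) / 2) * ((ℓ : ℝ) / 2 + 1) ∧
      Aᵀ = -A ∧
      (R.map (fun x : ℝ => (x : ℂ))) *
          (Matrix.of fun k l => (L k * L l * ρ).trace : Matrix (Fin 3) (Fin 3) ℂ) *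
          (R.map (fun x : ℝ => (x : ℂ)))ᵀ
        = D.map (fun x : ℝ => (x : ℂ)) + Complex.I • A.map (fun x : ℝ => (x : ℂ)) := by
  have hM : (secondMomentMatrix L ρ).IsHermitian :=
    isHermitian_secondMomentMatrix herm hρ.isHermitian
  obtain ⟨R, D, A, hRR, hdet, hD, hDtr, hA, hconj⟩ := hM.exists_rotation_conj_eq_diagonal_add_I_smul
  refine ⟨R, D, A, hRR, hdet, hD, ?_, hA, hconj⟩
  rw [hDtr, trace_secondMomentMatrix, casimir, smul_mul, one_mul, trace_smul, htr, smul_eq_mul,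
    mul_one, Complex.ofReal_re]

/-- Standard form: the second-moment matrix `M(ρ)_{kl} = tr(L_k L_l ρ)` of a density operator
`ρ` of a spin-`j` system (`j = ℓ/2`, dimension `ℓ+1`) can be brought, by conjugation with a
rotation `R ∈ SO(3)` arising from the adjoint action of SU(2), to the standard form
`R M Rᵀ = D + iA` with `D` real diagonal, `tr(D) = j(j+1)`, and `A` real antisymmetric
(so that `iA` is the traceless non-symmetric part). -/
theorem expectation_value_matrix_standard_form (ℓ : ℕ)
    (L : Fin 3 → Matrix (Fin (ℓ + 1)) (Fin (ℓ + 1)) ℂ)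
    (herm : ∀ k, (L k).IsHermitian)
    (comm : ∀ k l, L k * L l - L l * L k =
      Complex.I • ∑ m, (leviCivita k l m : ℂ) • L m)
    (casimir : ∑ k, L k * L k
      = ((((ℓ : ℝ) / 2) * ((ℓ : ℝ) / 2 + 1) : ℝ) : ℂ) • (1 : Matrix (Fin (ℓ + 1)) (Fin (ℓ + 1)) ℂ))
    (ρ : Matrix (Fin (ℓ + 1)) (Fin (ℓ + 1)) ℂ)
    (hρ : ρ.PosSemidef) (htr : ρ.trace = 1) :
    ∃ (R D A : Matrix (Fin 3) (Fin 3) ℝ),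
      Rᵀ * R = 1 ∧ R.det = 1 ∧
      (∀ k l, k ≠ l → D k l = 0) ∧
      D.trace = ((ℓ : ℝ) / 2) * ((ℓ : ℝ) / 2 + 1) ∧
      Aᵀ = -A ∧
      (R.map (fun x : ℝ => (x : ℂ))) *
          (Matrix.of fun k l => (L k * L l * ρ).trace : Matrix (Fin 3) (Fin 3) ℂ) *
          (R.map (fun x : ℝ => (x : ℂ)))ᵀ
        = D.map (fun x : ℝ => (x : ℂ)) + Complex.I • A.map (fun x : ℝ => (x : ℂ)) :=
  expectation_value_matrix_standard_form_general ℓ L herm casimir ρ hρ htr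
end
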